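/- Fix q ∈ ℂ with q ≠ 0 and q not a root of unity, an integer n ≥ 1, and set c(n) = −1/(qⁿ + q⁻ⁿ)² and λ_k = q^{n−2k}/(qⁿ + q⁻ⁿ) for k = 1, …, n. Let (e₋₁, e₁, A) be a Podleś representation with parameter c(n) on a finite-dimensional complex vector space V such that A is invertible. Then V = ⊕_{k=1}^{n} ker(A − λ_k·id); for every 1 ≤ k ≤ n−1 the restriction of e₁ is a linear isomorphism from ker(A − λ_k·id) onto ker(A − λ_{k+1}·id); in particular all the eigenspaces ker(A − λ_k·id) have the same dimension d and dim V = n·d. Moreover V is a direct sum of d subspaces, each of dimension n and each invariant under e₋₁, e₁ and A. -/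

import Mathlib

/-- A Podleś representation with parameter `c` on a complex vector space. -/
def PodlesRep (q c : ℂ) {V : Type*} [AddCommGroup V] [Module ℂ V]
    (em e1 A : Module.End ℂ V) : Prop :=
  em * e1 = A - A ^ 2 + c • (1 : Module.End ℂ V) ∧
  e1 * em = q ^ 2 • A - q ^ 4 • A ^ 2 + c • (1 : Module.End ℂ V) ∧
  e1 * A = q ^ 2 • (A * e1) ∧
  em * A = (q ^ 2)⁻¹ • (A * em)

/-!
Since `e₁ A = q² A e₁` and `e₋₁ A = q⁻² A e₋₁`, the operators `e₁` and `e₋₁` map the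
`λ_k`-eigenspace of `A` into the `λ_{k+1}`- and `λ_{k-1}`-eigenspaces, and for `c = c(n)` the
relations factor as `e₋₁ e₁ = -(A - λ₀)(A - λₙ)` and `e₁ e₋₁ = -q⁴ (A - λ₁)(A - λ_{n+1})`.
Applying `e₁` (or `e₋₁`) repeatedly to an eigenvector produces eigenvectors with pairwise
distinct eigenvalues, so in finite dimension the chain stops; where `e₁` stops the eigenvalue is
`λ₀` or `λₙ`, where `e₋₁` stops it is `λ₁` or `λ_{n+1}`, and comparing the two ends (the
eigenvalue is nonzero because `A` is invertible) leaves only `λ_k` with `1 ≤ k ≤ n`. Between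
these eigenspaces `e₁` is bijective, as both quadratic factors are invertible there. A downward
induction from `k = n`, where `e₁` lands in the zero `λ_{n+1}`-eigenspace, shows
`ker (A - λ_k)² = ker (A - λ_k)`, so `A` is diagonalizable. Transporting a basis `b₁, …, b_d`
of the `λ₁`-eigenspace along `e₁` gives the basis `e₁ʲ bᵢ` of `V`, and the strings
`bᵢ, e₁ bᵢ, …, e₁ⁿ⁻¹ bᵢ` span the invariant subspaces.
-/

open Set Submodule

theorem zpow_injective_of_pow_ne_one {G₀ : Type*} [GroupWithZero G₀] {x : G₀} (hx : x ≠ 0)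
    (hx' : ∀ k : ℕ, 0 < k → x ^ k ≠ 1) : Function.Injective (x ^ · : ℤ → G₀) := by
  have hfin : ¬IsOfFinOrder (Units.mk0 x hx) := by
    rw [isOfFinOrder_iff_pow_eq_one]
    rintro ⟨k, hk, h⟩
    exact hx' k hk (by simpa [Units.ext_iff] using h)
  intro a b hab
  exact injective_zpow_iff_not_isOfFinOrder.2 hfin (Units.ext (by simpa using hab))

namespace Module.End

variable {K V : Type*} [Field K] [AddCommGroup V] [Module K V] {T A : End K V} {r : K}

theorem sub_smul_one_mul_sub_smul_one_apply {μ : K} {x : V} (hx : x ∈ A.eigenspace μ) (a b : K) :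
    ((A - a • 1) * (A - b • 1)) x = ((μ - a) * (μ - b)) • x := by
  rw [mem_eigenspace_iff] at hx
  simp only [mul_apply, LinearMap.sub_apply, LinearMap.smul_apply, one_apply, map_sub, map_smul, hx]
  module

theorem sub_smul_one_mul_sub_smul_one (a b : K) :
    (A - a • 1) * (A - b • 1) = A ^ 2 - (a + b) • A + (a * b) • 1 := by
  simp only [mul_sub, sub_mul, smul_mul_assoc, mul_smul_comm, one_mul, mul_one, sq]
  module

theorem apply_sub_smul_one_of_mul_eq_smul (h : T * A = r • (A * T)) (hr : r ≠ 0) (μ : K)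
    (x : V) : T ((A - μ • 1) x) = r • (A - (r⁻¹ * μ) • 1) (T x) := by
  have hx : T (A x) = r • A (T x) := congrArg (· x) h
  simp [hx, smul_sub, smul_smul, mul_inv_cancel_left₀ hr]

theorem mapsTo_eigenspace_of_mul_eq_smul (h : T * A = r • (A * T)) (hr : r ≠ 0) (μ : K) :
    MapsTo T (A.eigenspace μ) (A.eigenspace (r⁻¹ * μ)) := by
  intro x hx
  rw [SetLike.mem_coe, eigenspace_def, LinearMap.mem_ker] at hx ⊢
  have := apply_sub_smul_one_of_mul_eq_smul h hr μ x
  rwa [hx, map_zero, eq_comm, smul_eq_zero, or_iff_right hr] at this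

theorem pow_apply_mem_eigenspace_of_mul_eq_smul (h : T * A = r • (A * T)) (hr : r ≠ 0) {μ : K}
    {x : V} (hx : x ∈ A.eigenspace μ) (j : ℕ) : (T ^ j) x ∈ A.eigenspace (r⁻¹ ^ j * μ) := by
  induction j with
  | zero => simpa using hx
  | succ j ih =>
    rw [pow_succ' T, mul_apply, pow_succ', mul_assoc]
    exact mapsTo_eigenspace_of_mul_eq_smul h hr _ ih

theorem exists_mem_eigenspace_apply_eq_zero [FiniteDimensional K V] (h : T * A = r • (A * T))
    (hr : Function.Injective (r ^ · : ℕ → K)) {μ : K} (hμ : μ ≠ 0) {x : V} (hx0 : x ≠ 0)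
    (hx : x ∈ A.eigenspace μ) : ∃ j : ℕ, ∃ u ∈ A.eigenspace (r⁻¹ ^ j * μ), u ≠ 0 ∧ T u = 0 := by
  have hr0 : r ≠ 0 := by
    rintro rfl
    exact absurd (@hr 1 2 (by simp)) (by norm_num)
  by_contra! hcon
  have hne (j : ℕ) : (T ^ j) x ≠ 0 := by
    induction j with
    | zero => simpa using hx0
    | succ j ih =>
      rw [pow_succ', mul_apply]
      exact hcon j _ (pow_apply_mem_eigenspace_of_mul_eq_smul h hr0 hx j) ih
  have hinj : Function.Injective fun j : Fin (finrank K V + 1) => r⁻¹ ^ (j : ℕ) * μ := by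
    intro a b hab
    simp only [inv_pow, mul_left_inj' hμ, inv_inj] at hab
    exact Fin.ext (hr hab)
  have hli := A.eigenvectors_linearIndependent' _ hinj (fun j => (T ^ (j : ℕ)) x)
    fun j => ⟨pow_apply_mem_eigenspace_of_mul_eq_smul h hr0 hx j, hne j⟩
  simpa using hli.fintype_card_le_finrank

theorem maxGenEigenspace_le_eigenspace {μ : K}
    (h : ∀ x, (A - μ • 1) ((A - μ • 1) x) = 0 → (A - μ • 1) x = 0) :
    A.maxGenEigenspace μ ≤ A.eigenspace μ := by
  intro x hx
  obtain ⟨m, hm⟩ := (mem_maxGenEigenspace _ _ _).1 hx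
  rw [eigenspace_def, LinearMap.mem_ker]
  clear hx
  induction m generalizing x with
  | zero => simp_all
  | succ m ih => exact h x (ih (by rwa [pow_succ, mul_apply] at hm))

end Module.End

namespace Set.BijOn

variable {R M M₂ : Type*} [Semiring R] [AddCommMonoid M] [Module R M] [AddCommMonoid M₂]
  [Module R M₂] {f : M →ₗ[R] M₂} {p : Submodule R M} {p₂ : Submodule R M₂}

noncomputable def linearEquiv (h : BijOn f p p₂) : p ≃ₗ[R] p₂ :=
  LinearEquiv.ofBijective (f.restrict h.mapsTo) h.bijective

@[simp]
theorem coe_linearEquiv_apply (h : BijOn f p p₂) (x : p) :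
    (h.linearEquiv x : M₂) = f x :=
  rfl

end Set.BijOn

namespace Module.Basis

variable {R M ι κ : Type*} [Ring R] [AddCommGroup M] [Module R M] (B : Basis (ι × κ) R M)

theorem iSupIndep_span_range_curry : iSupIndep fun i => span R (range fun j => B (i, j)) := by
  refine iSupIndep_def.2 fun i => ?_
  refine (B.linearIndependent.disjoint_span_image (s := {p | p.1 = i}) (t := {p | p.1 ≠ i})
    (disjoint_left.2 fun p h h' => h' h)).mono ?_ ?_
  · exact span_mono (by rintro _ ⟨j, rfl⟩; exact ⟨(i, j), rfl, rfl⟩)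
  · exact iSup₂_le fun i' hi' => span_mono (by rintro _ ⟨j, rfl⟩; exact ⟨(i', j), hi', rfl⟩)

theorem iSup_span_range_curry : ⨆ i, span R (range fun j => B (i, j)) = ⊤ := by
  rw [iSup_span, ← B.span_eq]
  congr
  ext
  simp

end Module.Basis

namespace Podles

open Module End

noncomputable def lam (q : ℂ) (n : ℕ) (k : ℤ) : ℂ :=
  q ^ ((n : ℤ) - 2 * k) / (q ^ (n : ℤ) + q ^ (-(n : ℤ)))

noncomputable def param (q : ℂ) (n : ℕ) : ℂ := -1 / (q ^ (n : ℤ) + q ^ (-(n : ℤ))) ^ 2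

variable {q : ℂ} {n : ℕ}

theorem zpow_add_zpow_neg_ne_zero (hq : q ≠ 0) (hq' : ∀ k : ℕ, 0 < k → q ^ k ≠ 1) :
    q ^ (n : ℤ) + q ^ (-(n : ℤ)) ≠ 0 := by
  intro h
  have hsq : q ^ ((n : ℤ) * 2) = q ^ (-(n : ℤ) * 2) := by
    rw [zpow_mul, zpow_mul, eq_neg_of_add_eq_zero_left h, even_two.neg_zpow]
  obtain rfl : n = 0 := by
    have := zpow_injective_of_pow_ne_one hq hq' hsq
    omega
  norm_num at h

theorem lam_injective (hq : q ≠ 0) (hq' : ∀ k : ℕ, 0 < k → q ^ k ≠ 1) :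
    Function.Injective (lam q n) := by
  intro a b hab
  have := zpow_injective_of_pow_ne_one hq hq'
    ((div_left_inj' (zpow_add_zpow_neg_ne_zero hq hq')).1 hab)
  omega

theorem lam_add (hq : q ≠ 0) (k : ℤ) (j : ℕ) : lam q n (k + j) = ((q ^ 2)⁻¹) ^ j * lam q n k := by
  rw [lam, lam, ← mul_div_assoc, ← zpow_natCast, ← zpow_natCast, ← zpow_neg, ← zpow_mul,
    ← zpow_add₀ hq]
  congr 2
  push_cast
  ring

theorem lam_sub (hq : q ≠ 0) (k : ℤ) (j : ℕ) : lam q n (k - j) = (q ^ 2) ^ j * lam q n k := by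
  rw [lam, lam, ← mul_div_assoc, ← zpow_natCast, ← zpow_natCast, ← zpow_mul,
    ← zpow_add₀ hq]
  congr 2
  push_cast
  ring

theorem lam_succ (hq : q ≠ 0) (k : ℤ) : lam q n (k + 1) = (q ^ 2)⁻¹ * lam q n k := by
  simpa using lam_add (n := n) hq k 1

theorem lam_pred (hq : q ≠ 0) (k : ℤ) : lam q n (k - 1) = q ^ 2 * lam q n k := by
  simpa using lam_sub (n := n) hq k 1

theorem param_eq_neg_lam_mul (hq : q ≠ 0) : param q n = -(lam q n 0 * lam q n n) := by
  rw [param, lam, lam, mul_zero, sub_zero, show (n : ℤ) - 2 * n = -n by ring, div_mul_div_comm,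
    ← zpow_add₀ hq, add_neg_cancel, zpow_zero, sq, neg_div]

theorem lam_zero_add_lam (hq : q ≠ 0) (hq' : ∀ k : ℕ, 0 < k → q ^ k ≠ 1) :
    lam q n 0 + lam q n n = 1 := by
  rw [lam, lam, ← add_div, mul_zero, sub_zero, show (n : ℤ) - 2 * n = -n by ring]
  exact div_self (zpow_add_zpow_neg_ne_zero hq hq')

theorem pow_sq_injective (hq : q ≠ 0) (hq' : ∀ k : ℕ, 0 < k → q ^ k ≠ 1) :
    Function.Injective fun j : ℕ => (q ^ 2) ^ j := by
  intro a b hab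
  have h2 : q ^ ((2 * a : ℕ) : ℤ) = q ^ ((2 * b : ℕ) : ℤ) := by
    simpa only [zpow_natCast, pow_mul] using hab
  have := zpow_injective_of_pow_ne_one hq hq' h2
  omega

theorem inv_sq_pow_injective (hq : q ≠ 0) (hq' : ∀ k : ℕ, 0 < k → q ^ k ≠ 1) :
    Function.Injective fun j : ℕ => ((q ^ 2)⁻¹) ^ j :=
  fun a b hab => pow_sq_injective hq hq' (inv_injective (by simpa only [inv_pow] using hab))

section Operators

variable {V : Type*} [AddCommGroup V] [Module ℂ V] {em e1 A : End ℂ V} {b : V}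

theorem em_mul_e1 (hq : q ≠ 0) (hq' : ∀ k : ℕ, 0 < k → q ^ k ≠ 1)
    (hrep : PodlesRep q (param q n) em e1 A) :
    em * e1 = -((A - lam q n 0 • 1) * (A - lam q n n • 1)) := by
  rw [hrep.1, sub_smul_one_mul_sub_smul_one, lam_zero_add_lam hq hq', param_eq_neg_lam_mul hq]
  module

theorem e1_mul_em (hq : q ≠ 0) (hq' : ∀ k : ℕ, 0 < k → q ^ k ≠ 1)
    (hrep : PodlesRep q (param q n) em e1 A) :
    e1 * em = -(q ^ 4 • ((A - lam q n 1 • 1) * (A - lam q n (n + 1) • 1))) := by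
  have h1 : q ^ 4 * (lam q n 1 + lam q n (n + 1)) = q ^ 2 := by
    rw [lam_succ hq, ← zero_add (1 : ℤ), lam_succ hq, ← mul_add, lam_zero_add_lam hq hq']
    field_simp
  have h2 : q ^ 4 * (lam q n 1 * lam q n (n + 1)) = lam q n 0 * lam q n n := by
    rw [lam_succ hq, ← zero_add (1 : ℤ), lam_succ hq]
    field_simp
  rw [hrep.2.1, sub_smul_one_mul_sub_smul_one, param_eq_neg_lam_mul hq, ← h2]
  match_scalars
  · linear_combination -h1
  · ring
  · ring

theorem em_e1_apply_of_mem (hq : q ≠ 0) (hq' : ∀ k : ℕ, 0 < k → q ^ k ≠ 1)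
    (hrep : PodlesRep q (param q n) em e1 A) {μ : ℂ} {x : V} (hx : x ∈ A.eigenspace μ) :
    em (e1 x) = (-((μ - lam q n 0) * (μ - lam q n n))) • x := by
  rw [← mul_apply, em_mul_e1 hq hq' hrep, LinearMap.neg_apply,
    sub_smul_one_mul_sub_smul_one_apply hx, neg_smul]

theorem e1_em_apply_of_mem (hq : q ≠ 0) (hq' : ∀ k : ℕ, 0 < k → q ^ k ≠ 1)
    (hrep : PodlesRep q (param q n) em e1 A) {μ : ℂ} {x : V} (hx : x ∈ A.eigenspace μ) :
    e1 (em x) = (-(q ^ 4 * ((μ - lam q n 1) * (μ - lam q n (n + 1))))) • x := by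
  rw [← mul_apply, e1_mul_em hq hq' hrep, LinearMap.neg_apply, LinearMap.smul_apply,
    sub_smul_one_mul_sub_smul_one_apply hx, smul_smul, neg_smul]

theorem mapsTo_e1 (hq : q ≠ 0) (hrep : PodlesRep q (param q n) em e1 A) (k : ℤ) :
    MapsTo e1 (A.eigenspace (lam q n k)) (A.eigenspace (lam q n (k + 1))) := by
  simpa only [lam_succ hq] using mapsTo_eigenspace_of_mul_eq_smul hrep.2.2.1 (by simp [hq]) _

theorem mapsTo_em (hq : q ≠ 0) (hrep : PodlesRep q (param q n) em e1 A) (k : ℤ) :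
    MapsTo em (A.eigenspace (lam q n k)) (A.eigenspace (lam q n (k - 1))) := by
  simpa only [lam_pred hq, inv_inv] using
    mapsTo_eigenspace_of_mul_eq_smul hrep.2.2.2 (by simp [hq]) _

theorem e1_apply_sub_lam (hq : q ≠ 0) (hrep : PodlesRep q (param q n) em e1 A) (k : ℤ)
    (x : V) : e1 ((A - lam q n k • 1) x) = q ^ 2 • (A - lam q n (k + 1) • 1) (e1 x) := by
  rw [lam_succ hq, apply_sub_smul_one_of_mul_eq_smul hrep.2.2.1 (by simp [hq])]

theorem eq_lam_of_e1_eq_zero (hq : q ≠ 0) (hq' : ∀ k : ℕ, 0 < k → q ^ k ≠ 1)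
    (hrep : PodlesRep q (param q n) em e1 A) {ν : ℂ} {u : V} (hu : u ∈ A.eigenspace ν)
    (hu0 : u ≠ 0) (he1 : e1 u = 0) : ν = lam q n 0 ∨ ν = lam q n n := by
  have h := em_e1_apply_of_mem hq hq' hrep hu
  rwa [he1, map_zero, eq_comm, smul_eq_zero, or_iff_left hu0, neg_eq_zero, mul_eq_zero,
    sub_eq_zero, sub_eq_zero] at h

theorem eq_lam_of_em_eq_zero (hq : q ≠ 0) (hq' : ∀ k : ℕ, 0 < k → q ^ k ≠ 1)
    (hrep : PodlesRep q (param q n) em e1 A) {ν : ℂ} {u : V} (hu : u ∈ A.eigenspace ν)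
    (hu0 : u ≠ 0) (hem : em u = 0) : ν = lam q n 1 ∨ ν = lam q n (n + 1) := by
  have h := e1_em_apply_of_mem hq hq' hrep hu
  rwa [hem, map_zero, eq_comm, smul_eq_zero, or_iff_left hu0, neg_eq_zero, mul_eq_zero,
    or_iff_right (pow_ne_zero 4 hq), mul_eq_zero, sub_eq_zero, sub_eq_zero] at h

theorem exists_lam_eq_of_hasEigenvalue [FiniteDimensional ℂ V] (hq : q ≠ 0)
    (hq' : ∀ k : ℕ, 0 < k → q ^ k ≠ 1) (hrep : PodlesRep q (param q n) em e1 A)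
    (hA : Function.Injective A) {μ : ℂ} (hμ : A.HasEigenvalue μ) :
    ∃ k : ℕ, 1 ≤ k ∧ k ≤ n ∧ μ = lam q n k := by
  obtain ⟨x, hx, hx0⟩ := hμ.exists_hasEigenvector
  have hμ0 : μ ≠ 0 := by
    rintro rfl
    exact hx0 (hA (by simpa using mem_eigenspace_iff.1 hx))
  have hq2 : q ^ 2 ≠ 0 := pow_ne_zero 2 hq
  obtain ⟨j, u, hu, hu0, he1⟩ := exists_mem_eigenspace_apply_eq_zero hrep.2.2.1
    (pow_sq_injective hq hq') hμ0 hx0 hx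
  obtain ⟨i, w, hw, hw0, hem⟩ := exists_mem_eigenspace_apply_eq_zero hrep.2.2.2
    (inv_sq_pow_injective hq hq') hμ0 hx0 hx
  have htop : μ = lam q n (0 - j) ∨ μ = lam q n (n - j) := by
    rcases eq_lam_of_e1_eq_zero hq hq' hrep hu hu0 he1 with h | h <;>
      [left; right] <;>
      rw [lam_sub hq, ← h, inv_pow, mul_inv_cancel_left₀ (pow_ne_zero _ hq2)]
  have hbot : μ = lam q n (1 + i) ∨ μ = lam q n (n + 1 + i) := by
    rcases eq_lam_of_em_eq_zero hq hq' hrep hw hw0 hem with h | h <;>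
      [left; right] <;>
      rw [lam_add hq, ← h, inv_inv, inv_pow, inv_mul_cancel_left₀ (pow_ne_zero _ hq2)]
  have hlam {a b : ℤ} (ha : μ = lam q n a) (hb : μ = lam q n b) : a = b :=
    lam_injective hq hq' (ha.symm.trans hb)
  rcases hbot with h | h
  · refine ⟨1 + i, by omega, ?_, by rw [h]; push_cast; rfl⟩
    rcases htop with h' | h' <;> have := hlam h h' <;> omega
  · rcases htop with h' | h' <;> have := hlam h h' <;> omega

theorem eigenspace_lam_eq_bot [FiniteDimensional ℂ V] (hq : q ≠ 0)
    (hq' : ∀ k : ℕ, 0 < k → q ^ k ≠ 1) (hrep : PodlesRep q (param q n) em e1 A)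
    (hA : Function.Injective A) {k : ℤ} (hk : k < 1 ∨ n < k) :
    A.eigenspace (lam q n k) = ⊥ := by
  by_contra h
  obtain ⟨k', hk1, hkn, h'⟩ := exists_lam_eq_of_hasEigenvalue hq hq' hrep hA h
  have := lam_injective hq hq' h'
  omega

theorem lam_sub_lam_ne_zero (hq : q ≠ 0) (hq' : ∀ k : ℕ, 0 < k → q ^ k ≠ 1) {a b : ℤ}
    (h : a ≠ b) : lam q n a - lam q n b ≠ 0 :=
  sub_ne_zero.2 ((lam_injective hq hq').ne h)

theorem bijOn_e1 (hq : q ≠ 0) (hq' : ∀ k : ℕ, 0 < k → q ^ k ≠ 1)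
    (hrep : PodlesRep q (param q n) em e1 A) {k : ℤ} (hk1 : 1 ≤ k) (hkn : k < n) :
    BijOn e1 (A.eigenspace (lam q n k)) (A.eigenspace (lam q n (k + 1))) := by
  refine ⟨mapsTo_e1 hq hrep k, LinearMap.disjoint_ker_iff_injOn.1 ?_, ?_⟩
  · refine Submodule.disjoint_def.2 fun x hx hx0 => ?_
    have h := em_e1_apply_of_mem hq hq' hrep hx
    rw [LinearMap.mem_ker.1 hx0, map_zero, eq_comm, smul_eq_zero] at h
    refine h.resolve_left (neg_ne_zero.2 (mul_ne_zero ?_ ?_)) <;>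
      exact lam_sub_lam_ne_zero hq hq' (by omega)
  · intro y hy
    set β := -(q ^ 4 * ((lam q n (k + 1) - lam q n 1) * (lam q n (k + 1) - lam q n (n + 1))))
    have hβ : β ≠ 0 := by
      refine neg_ne_zero.2 (mul_ne_zero (pow_ne_zero 4 hq) (mul_ne_zero ?_ ?_)) <;>
        exact lam_sub_lam_ne_zero hq hq' (by omega)
    have hem := mapsTo_em hq hrep (k + 1) hy
    rw [add_sub_cancel_right] at hem
    refine ⟨β⁻¹ • em y, Submodule.smul_mem _ _ hem, ?_⟩
    rw [map_smul, e1_em_apply_of_mem hq hq' hrep hy, smul_smul, inv_mul_cancel₀ hβ, one_smul]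

theorem bijOn_e1_pow (hq : q ≠ 0) (hq' : ∀ k : ℕ, 0 < k → q ^ k ≠ 1)
    (hrep : PodlesRep q (param q n) em e1 A) {k : ℤ} (hk1 : 1 ≤ k) (j : ℕ) (hkj : k + j ≤ n) :
    BijOn (e1 ^ j) (A.eigenspace (lam q n k)) (A.eigenspace (lam q n (k + j))) := by
  induction j with
  | zero => simpa [coe_one] using bijOn_id _
  | succ j ih =>
    rw [pow_succ', coe_mul, Nat.cast_succ, ← add_assoc]
    exact (bijOn_e1 hq hq' hrep (by omega) (by omega)).comp (ih (by omega))

theorem sub_lam_sq_apply_e1_eq_zero (hq : q ≠ 0) (hrep : PodlesRep q (param q n) em e1 A)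
    {k : ℤ} {x : V} (hx : (A - lam q n k • 1) ((A - lam q n k • 1) x) = 0) :
    (A - lam q n (k + 1) • 1) ((A - lam q n (k + 1) • 1) (e1 x)) = 0 := by
  have h := e1_apply_sub_lam hq hrep k ((A - lam q n k • 1) x)
  rw [hx, map_zero, e1_apply_sub_lam hq hrep k, map_smul, smul_smul, eq_comm,
    smul_eq_zero] at h
  exact h.resolve_left (by simp [hq])

theorem sub_lam_apply_eq_zero_of_sq [FiniteDimensional ℂ V] (hq : q ≠ 0)
    (hq' : ∀ k : ℕ, 0 < k → q ^ k ≠ 1) (hrep : PodlesRep q (param q n) em e1 A)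
    (hA : Function.Injective A) {k : ℤ} (hk1 : 1 ≤ k) (hkn : k ≤ n) {x : V}
    (hx : (A - lam q n k • 1) ((A - lam q n k • 1) x) = 0) : (A - lam q n k • 1) x = 0 := by
  have hbot {k : ℤ} (hk : k < 1 ∨ n < k) {z : V} (hz : (A - lam q n k • 1) z = 0) : z = 0 := by
    rw [← LinearMap.mem_ker, ← eigenspace_def, eigenspace_lam_eq_bot hq hq' hrep hA hk] at hz
    exact hz
  induction k, hkn using Int.leInductionDown generalizing x with
  | base =>
    have he1 : e1 x = 0 :=
      hbot (by omega) (hbot (by omega) (sub_lam_sq_apply_e1_eq_zero hq hrep hx))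
    have h := congrArg (· x) (em_mul_e1 hq hq' hrep)
    simp only [mul_apply, he1, map_zero, LinearMap.neg_apply] at h
    exact hbot (k := 0) (by omega) (neg_eq_zero.1 h.symm)
  | pred k hkn ih =>
    have hsq := sub_lam_sq_apply_e1_eq_zero hq hrep hx
    rw [sub_add_cancel] at hsq
    have h := ih (by omega) hsq
    have he1 := e1_apply_sub_lam hq hrep (k - 1) x
    rw [sub_add_cancel, h, smul_zero] at he1
    have hmem : (A - lam q n (k - 1) • 1) x ∈ A.eigenspace (lam q n (k - 1)) := by
      rw [eigenspace_def, LinearMap.mem_ker, hx]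
    exact (bijOn_e1 hq hq' hrep hk1 (by omega)).injOn hmem (zero_mem _) (by rw [he1, map_zero])

theorem iSup_eigenspace_lam_eq_top [FiniteDimensional ℂ V] (hq : q ≠ 0)
    (hq' : ∀ k : ℕ, 0 < k → q ^ k ≠ 1) (hrep : PodlesRep q (param q n) em e1 A)
    (hA : Function.Injective A) :
    ⨆ k : Fin n, A.eigenspace (lam q n (k + 1 : ℕ)) = ⊤ := by
  rw [eq_top_iff, ← iSup_maxGenEigenspace_eq_top A]
  refine iSup_le fun μ => ?_
  by_cases hμ : A.maxGenEigenspace μ = ⊥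
  · simp [hμ]
  obtain ⟨k, hk1, hkn, rfl⟩ := exists_lam_eq_of_hasEigenvalue hq hq' hrep hA
    ((hasUnifEigenvalue_iff_hasUnifEigenvalue_one (by simp)).1 hμ)
  refine (maxGenEigenspace_le_eigenspace fun x hx =>
    sub_lam_apply_eq_zero_of_sq hq hq' hrep hA (by omega) (by omega) hx).trans ?_
  refine le_iSup_of_le ⟨k - 1, by omega⟩ ?_
  rw [Nat.sub_add_cancel hk1]

theorem iSupIndep_eigenspace_lam (hq : q ≠ 0) (hq' : ∀ k : ℕ, 0 < k → q ^ k ≠ 1) :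
    iSupIndep fun k : Fin n => A.eigenspace (lam q n (k + 1 : ℕ)) :=
  A.eigenspaces_iSupIndep.comp fun a b h => Fin.ext (by have := lam_injective hq hq' h; omega)

theorem mem_eigenspace_e1_pow (hq : q ≠ 0) (hrep : PodlesRep q (param q n) em e1 A) {k : ℤ}
    {x : V} (hx : x ∈ A.eigenspace (lam q n k)) (j : ℕ) :
    (e1 ^ j) x ∈ A.eigenspace (lam q n (k + j)) := by
  rw [lam_add hq]
  exact pow_apply_mem_eigenspace_of_mul_eq_smul hrep.2.2.1 (by simp [hq]) hx j

theorem A_mem_span_e1_pow (hq : q ≠ 0) (hrep : PodlesRep q (param q n) em e1 A)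
    (hb : b ∈ A.eigenspace (lam q n 1)) :
    ∀ x ∈ span ℂ (range fun j : Fin n => (e1 ^ (j : ℕ)) b),
      A x ∈ span ℂ (range fun j : Fin n => (e1 ^ (j : ℕ)) b) := by
  refine fun x hx => (span_le (p := (span ℂ _).comap A)).2 (range_subset_iff.2 fun j => ?_) hx
  rw [SetLike.mem_coe, mem_comap, mem_eigenspace_iff.1 (mem_eigenspace_e1_pow hq hrep hb j)]
  exact smul_mem _ _ (subset_span ⟨j, rfl⟩)

theorem e1_mem_span_e1_pow [FiniteDimensional ℂ V] (hq : q ≠ 0)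
    (hq' : ∀ k : ℕ, 0 < k → q ^ k ≠ 1) (hrep : PodlesRep q (param q n) em e1 A)
    (hA : Function.Injective A) (hb : b ∈ A.eigenspace (lam q n 1)) :
    ∀ x ∈ span ℂ (range fun j : Fin n => (e1 ^ (j : ℕ)) b),
      e1 x ∈ span ℂ (range fun j : Fin n => (e1 ^ (j : ℕ)) b) := by
  refine fun x hx => (span_le (p := (span ℂ _).comap e1)).2 (range_subset_iff.2 fun j => ?_) hx
  rw [SetLike.mem_coe, mem_comap, ← mul_apply, ← pow_succ']
  rcases (Nat.succ_le_of_lt j.2).lt_or_eq with hj | hj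
  · exact subset_span ⟨⟨j + 1, hj⟩, rfl⟩
  · have h := mem_eigenspace_e1_pow hq hrep hb (j + 1)
    rw [eigenspace_lam_eq_bot hq hq' hrep hA (by omega), mem_bot] at h
    rw [h]
    exact zero_mem _

theorem em_mem_span_e1_pow [FiniteDimensional ℂ V] (hq : q ≠ 0)
    (hq' : ∀ k : ℕ, 0 < k → q ^ k ≠ 1) (hrep : PodlesRep q (param q n) em e1 A)
    (hA : Function.Injective A) (hb : b ∈ A.eigenspace (lam q n 1)) :
    ∀ x ∈ span ℂ (range fun j : Fin n => (e1 ^ (j : ℕ)) b),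
      em x ∈ span ℂ (range fun j : Fin n => (e1 ^ (j : ℕ)) b) := by
  refine fun x hx => (span_le (p := (span ℂ _).comap em)).2 (range_subset_iff.2 fun j => ?_) hx
  rw [SetLike.mem_coe, mem_comap]
  obtain ⟨j, hj⟩ := j
  cases j with
  | zero =>
    have h := mapsTo_em hq hrep 1 hb
    rw [sub_self, eigenspace_lam_eq_bot hq hq' hrep hA (by omega)] at h
    rw [pow_zero, one_apply, (mem_bot ℂ).1 h]
    exact zero_mem _
  | succ j =>
    rw [pow_succ', mul_apply, em_e1_apply_of_mem hq hq' hrep (mem_eigenspace_e1_pow hq hrep hb j)]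
    exact smul_mem _ _ (subset_span ⟨⟨j, by omega⟩, rfl⟩)

theorem finrank_eigenspace_lam [FiniteDimensional ℂ V] (hq : q ≠ 0)
    (hq' : ∀ k : ℕ, 0 < k → q ^ k ≠ 1) (hrep : PodlesRep q (param q n) em e1 A) {k : ℕ}
    (hk1 : 1 ≤ k) (hkn : k ≤ n) :
    finrank ℂ (A.eigenspace (lam q n k)) = finrank ℂ (A.eigenspace (lam q n 1)) := by
  obtain ⟨j, rfl⟩ := Nat.exists_eq_add_of_le' hk1
  have h := bijOn_e1_pow hq hq' hrep le_rfl j (by omega)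
  rw [add_comm] at h
  exact_mod_cast h.linearEquiv.finrank_eq.symm

theorem exists_basis_e1_pow [FiniteDimensional ℂ V] (hq : q ≠ 0)
    (hq' : ∀ k : ℕ, 0 < k → q ^ k ≠ 1) (hrep : PodlesRep q (param q n) em e1 A)
    (hA : Function.Injective A) :
    ∃ (b : Fin (finrank ℂ (A.eigenspace (lam q n 1))) → V)
      (B : Basis (Fin (finrank ℂ (A.eigenspace (lam q n 1))) × Fin n) ℂ V),
      (∀ i, b i ∈ A.eigenspace (lam q n 1)) ∧ ∀ i j, B (i, j) = (e1 ^ (j : ℕ)) (b i) := by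
  classical
  have hbij (j : Fin n) : BijOn (e1 ^ (j : ℕ)) (A.eigenspace (lam q n 1))
      (A.eigenspace (lam q n (j + 1 : ℕ))) := by
    simpa [add_comm] using bijOn_e1_pow hq hq' hrep le_rfl j (by omega)
  have hint : DirectSum.IsInternal fun j : Fin n => A.eigenspace (lam q n (j + 1 : ℕ)) :=
    (DirectSum.isInternal_submodule_iff_iSupIndep_and_iSup_eq_top _).2
      ⟨iSupIndep_eigenspace_lam hq hq', iSup_eigenspace_lam_eq_top hq hq' hrep hA⟩
  let b := finBasis ℂ (A.eigenspace (lam q n 1))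
  refine ⟨fun i => b i, (hint.collectedBasis fun j => b.map (hbij j).linearEquiv).reindex
    ((Equiv.sigmaEquivProd _ _).trans (Equiv.prodComm _ _)), fun i => (b i).2, fun i j => ?_⟩
  simp [hint.collectedBasis_coe]

theorem exists_invariant_decomposition [FiniteDimensional ℂ V] (hq : q ≠ 0)
    (hq' : ∀ k : ℕ, 0 < k → q ^ k ≠ 1) (hrep : PodlesRep q (param q n) em e1 A)
    (hA : Function.Injective A) :
    ∃ d : ℕ,
      (∀ k : ℕ, 1 ≤ k → k ≤ n → finrank ℂ (A.eigenspace (lam q n k)) = d) ∧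
      finrank ℂ V = n * d ∧
      ∃ Ws : Fin d → Submodule ℂ V,
        iSupIndep Ws ∧ (⨆ i, Ws i) = ⊤ ∧
        ∀ i, finrank ℂ (Ws i) = n ∧
          (∀ x ∈ Ws i, em x ∈ Ws i) ∧ (∀ x ∈ Ws i, e1 x ∈ Ws i) ∧
          (∀ x ∈ Ws i, A x ∈ Ws i) := by
  obtain ⟨b, B, hb, hB⟩ := exists_basis_e1_pow hq hq' hrep hA
  have hWs (i) : span ℂ (range fun j => B (i, j)) =
      span ℂ (range fun j : Fin n => (e1 ^ (j : ℕ)) (b i)) := by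
    simp only [hB]
  refine ⟨_, fun k hk1 hkn => finrank_eigenspace_lam hq hq' hrep hk1 hkn, ?_,
    fun i => span ℂ (range fun j : Fin n => (e1 ^ (j : ℕ)) (b i)), ?_, ?_, fun i =>
      ⟨?_, em_mem_span_e1_pow hq hq' hrep hA (hb i), e1_mem_span_e1_pow hq hq' hrep hA (hb i),
        A_mem_span_e1_pow hq hrep (hb i)⟩⟩
  · rw [finrank_eq_card_basis B]
    simp [mul_comm]
  · simpa only [hWs] using B.iSupIndep_span_range_curry
  · simpa only [hWs] using B.iSup_span_range_curry
  · have hli : LinearIndependent ℂ fun j : Fin n => (e1 ^ (j : ℕ)) (b i) := by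
      simp only [← hB]
      exact B.linearIndependent.comp _ (Prod.mk_right_injective i)
    exact (finrank_span_eq_card hli).trans (Fintype.card_fin n)

end Operators

end Podles

theorem stmt6 {V : Type*} [AddCommGroup V] [Module ℂ V] [FiniteDimensional ℂ V]
    (q : ℂ) (hq : q ≠ 0) (hq' : ∀ k : ℕ, 0 < k → q ^ k ≠ 1)
    (n : ℕ)
    (em e1 A : Module.End ℂ V)
    (hrep : PodlesRep q (-1 / (q ^ (n : ℤ) + q ^ (-(n : ℤ))) ^ 2) em e1 A)
    (hA : Function.Bijective ⇑A) :
    let lam : ℕ → ℂ := fun k => q ^ ((n : ℤ) - 2 * (k : ℤ)) / (q ^ (n : ℤ) + q ^ (-(n : ℤ)))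
    let E : ℕ → Submodule ℂ V := fun k => LinearMap.ker (A - lam k • (1 : Module.End ℂ V))
    (iSupIndep fun k : Fin n => E ((k : ℕ) + 1)) ∧
    (⨆ k : Fin n, E ((k : ℕ) + 1)) = ⊤ ∧
    (∀ k : ℕ, 1 ≤ k → k ≤ n - 1 →
      (∀ x ∈ E k, e1 x ∈ E (k + 1)) ∧
      (∀ x ∈ E k, e1 x = 0 → x = 0) ∧
      (∀ y ∈ E (k + 1), ∃ x ∈ E k, e1 x = y)) ∧
    ∃ d : ℕ,
      (∀ k : ℕ, 1 ≤ k → k ≤ n → Module.finrank ℂ (E k) = d) ∧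
      Module.finrank ℂ V = n * d ∧
      ∃ Ws : Fin d → Submodule ℂ V,
        iSupIndep Ws ∧ (⨆ i, Ws i) = ⊤ ∧
        ∀ i, Module.finrank ℂ (Ws i) = n ∧
          (∀ x ∈ Ws i, em x ∈ Ws i) ∧ (∀ x ∈ Ws i, e1 x ∈ Ws i) ∧
          (∀ x ∈ Ws i, A x ∈ Ws i) := by
  intro lam E
  have hE : E = fun k : ℕ => A.eigenspace (Podles.lam q n k) :=
    funext fun k => Module.End.eigenspace_def.symm
  rw [hE]
  refine ⟨Podles.iSupIndep_eigenspace_lam hq hq',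
    Podles.iSup_eigenspace_lam_eq_top hq hq' hrep hA.1, fun k hk1 hkn => ?_,
    Podles.exists_invariant_decomposition hq hq' hrep hA.1⟩
  have h := Podles.bijOn_e1 hq hq' hrep (k := k) (by omega) (by omega)
  push_cast
  exact ⟨fun x hx => h.mapsTo hx, fun x hx h0 => h.injOn hx (zero_mem _) (by rw [h0, map_zero]),
    fun y hy => h.surjOn hy⟩
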